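/- In the marble-splitting game with parameter R, Alice has a deterministic oblivious strategy using O(R³) operations and only O(R²) insertions that forces some marble to have value strictly greater than 1 at some point, regardless of how Bob assigns values. -/

import Mathlib

/-- Operations of the marble-splitting game: `ins` inserts a new marble into
bag 1; `split a b` replaces two live marbles `a, b` lying in the same bag `i ≥ 1`
by two new marbles placed in bags `i+1` and `i−1`. -/
inductive MOp where
  | ins : MOp
  | split : ℕ → ℕ → MOp
deriving DecidableEq

/-- Game state: marbles are identified by creation index (`next` is the next
fresh index), `bag` records the bag of each marble, `live` the marbles present. -/
structure MState where
  next : ℕ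
  bag : ℕ → ℕ
  live : Finset ℕ

/-- One step of the marble-splitting game (bags are determined by the moves
alone; values are irrelevant to the dynamics). -/
def mstep (s : MState) : MOp → MState
  | MOp.ins => ⟨s.next + 1, Function.update s.bag s.next 1, insert s.next s.live⟩
  | MOp.split a b =>
      ⟨s.next + 2,
       fun i => if i = s.next then s.bag a + 1
                else if i = s.next + 1 then s.bag a - 1 else s.bag i,
       insert s.next (insert (s.next + 1) ((s.live.erase a).erase b))⟩

def minit : MState := ⟨0, fun _ => 0, ∅⟩

def mrun (ops : List MOp) : MState := ops.foldl mstep minit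

/-- Validity of Alice's (oblivious) move sequence: every split acts on two
distinct live marbles lying in the same bag `i ≥ 1`. -/
def mvalid : MState → List MOp → Prop
  | _, [] => True
  | s, MOp.ins :: rest => mvalid (mstep s MOp.ins) rest
  | s, MOp.split a b :: rest =>
      a ∈ s.live ∧ b ∈ s.live ∧ a ≠ b ∧ s.bag a = s.bag b ∧ 1 ≤ s.bag a ∧
      mvalid (mstep s (MOp.split a b)) rest

/-- Bob's value assignment `v` is consistent with the run: inserted marbles get
values in `[−1,1]`; a split of `x, y` produces values with sum within `δ` of
`v x + v y` and difference at least `2/R`. -/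
def mconsistent (R δ : ℝ) (v : ℕ → ℝ) : MState → List MOp → Prop
  | _, [] => True
  | s, MOp.ins :: rest => |v s.next| ≤ 1 ∧ mconsistent R δ v (mstep s MOp.ins) rest
  | s, MOp.split a b :: rest =>
      |v s.next + v (s.next + 1) - (v a + v b)| ≤ δ ∧
      2 / R ≤ v s.next - v (s.next + 1) ∧
      mconsistent R δ v (mstep s (MOp.split a b)) rest

def MOp.isIns : MOp → Bool
  | MOp.ins => true
  | _ => false


/-!
Let `Φ = ∑ bag x · v x` over the live marbles. An insertion lowers `Φ` by at most `1` and raises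
the total mass `∑ bag x` by `1`; a split in bag `i` preserves the mass and raises `Φ` by at least
`2/R - iδ`. If no value ever exceeded `1`, then finally `Φ ≤ mass = #insertions`, so
`#splits · (2/R - Bδ) ≤ 2 · #insertions` when all splits happen in bags `≤ B`.

Bags do not depend on the values, so Alice may plan her moves as a chip-firing program on the
number of marbles per bag. Building one marble in each of the bags `1, …, k` for `k = 8R` costs
`(k² + k)/2` insertions and `(k³ - k)/6` splits, all in bags `≤ k`, which violates that inequality.
-/

@[simp] theorem MOp.isIns_ins : MOp.ins.isIns = true := rfl

@[simp] theorem MOp.isIns_split (a b : ℕ) : (MOp.split a b).isIns = false := rfl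

def ValidBelow (B : ℕ) : MState → List MOp → Prop
  | _, [] => True
  | s, .ins :: rest => ValidBelow B (mstep s .ins) rest
  | s, .split a b :: rest =>
      a ∈ s.live ∧ b ∈ s.live ∧ a ≠ b ∧ s.bag a = s.bag b ∧ 1 ≤ s.bag a ∧ s.bag a ≤ B ∧
      ValidBelow B (mstep s (.split a b)) rest

theorem ValidBelow.mvalid {B : ℕ} {s : MState} {ops : List MOp} (h : ValidBelow B s ops) :
    mvalid s ops := by
  induction ops generalizing s with
  | nil => trivial
  | cons o ops ih =>
    cases o with
    | ins => exact ih h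
    | split a b => exact ⟨h.1, h.2.1, h.2.2.1, h.2.2.2.1, h.2.2.2.2.1, ih h.2.2.2.2.2.2⟩

namespace MState

variable (s : MState)

def Fresh : Prop := ∀ j ∈ s.live, j < s.next

def liveSum {M : Type*} [AddCommMonoid M] (F : ℕ → ℕ → M) : M := ∑ j ∈ s.live, F j (s.bag j)

def mass : ℕ := s.liveSum fun _ b => b

noncomputable def potential (v : ℕ → ℝ) : ℝ := s.liveSum fun j b => (b : ℝ) * v j

variable {s}

theorem Fresh.mstep (hs : s.Fresh) (o : MOp) : (mstep s o).Fresh := by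
  intro j hj
  cases o with
  | ins =>
    rcases Finset.mem_insert.mp hj with rfl | hj
    · exact Nat.lt_succ_self _
    · exact (hs j hj).trans (Nat.lt_succ_self _)
  | split a b =>
    simp only [_root_.mstep, Finset.mem_insert, Finset.mem_erase] at hj ⊢
    rcases hj with rfl | rfl | ⟨-, -, hj⟩
    · omega
    · omega
    · exact (hs j hj).trans (by omega)

theorem Fresh.foldl (hs : s.Fresh) (ops : List MOp) : (ops.foldl _root_.mstep s).Fresh := by
  induction ops generalizing s with
  | nil => exact hs
  | cons o ops ih => exact ih (hs.mstep o)

theorem fresh_minit : minit.Fresh := fun _ h => absurd h (Finset.notMem_empty _)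

section liveSum

variable {M : Type*} [AddCommMonoid M] (F : ℕ → ℕ → M)

theorem liveSum_mstep_ins (hs : s.Fresh) :
    (mstep s .ins).liveSum F = s.liveSum F + F s.next 1 := by
  have hn : s.next ∉ s.live := fun h => (hs _ h).false
  simp only [liveSum, mstep, Finset.sum_insert hn, Function.update_self]
  rw [add_comm]
  congr 1
  refine Finset.sum_congr rfl fun j hj => ?_
  rw [Function.update_of_ne (fun h : j = s.next => hn (h ▸ hj))]

theorem liveSum_mstep_split (hs : s.Fresh) {a b : ℕ} (ha : a ∈ s.live) (hb : b ∈ s.live)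
    (hab : a ≠ b) (hbag : s.bag b = s.bag a) :
    (mstep s (.split a b)).liveSum F + F a (s.bag a) + F b (s.bag a) =
      s.liveSum F + F s.next (s.bag a + 1) + F (s.next + 1) (s.bag a - 1) := by
  set E := (s.live.erase a).erase b
  have hE : ∀ j ∈ E, j < s.next := fun j hj =>
    hs j (Finset.mem_of_mem_erase (Finset.mem_of_mem_erase hj))
  have hn₁ : s.next + 1 ∉ E := fun h => by have := hE _ h; omega
  have hn₀ : s.next ∉ insert (s.next + 1) E := by
    simp only [Finset.mem_insert, not_or]
    exact ⟨by omega, fun h => (hE _ h).false⟩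
  have hsplit : s.liveSum F = F a (s.bag a) + (F b (s.bag a) + ∑ j ∈ E, F j (s.bag j)) := by
    rw [liveSum, ← Finset.add_sum_erase _ _ ha,
      ← Finset.add_sum_erase _ _ (Finset.mem_erase.mpr ⟨hab.symm, hb⟩), hbag]
  have hrest : ∑ j ∈ E, F j ((mstep s (.split a b)).bag j) = ∑ j ∈ E, F j (s.bag j) :=
    Finset.sum_congr rfl fun j hj => by
      have := hE j hj
      simp only [mstep, if_neg (show j ≠ s.next by omega), if_neg (show j ≠ s.next + 1 by omega)]
  rw [hsplit, liveSum]
  change ∑ j ∈ insert s.next (insert (s.next + 1) E), F j ((mstep s (.split a b)).bag j) + _ + _ = _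
  rw [Finset.sum_insert hn₀, Finset.sum_insert hn₁, hrest]
  simp only [mstep, if_pos, if_neg (show s.next + 1 ≠ s.next by omega)]
  abel

end liveSum

theorem mass_mstep_ins (hs : s.Fresh) : (mstep s .ins).mass = s.mass + 1 :=
  s.liveSum_mstep_ins _ hs

theorem mass_mstep_split (hs : s.Fresh) {a b : ℕ} (ha : a ∈ s.live) (hb : b ∈ s.live)
    (hab : a ≠ b) (hbag : s.bag b = s.bag a) (hi : 1 ≤ s.bag a) :
    (mstep s (.split a b)).mass = s.mass := by
  have := s.liveSum_mstep_split (fun _ b => b) hs ha hb hab hbag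
  simp only [mass] at this ⊢
  omega

theorem mass_foldl : ∀ (ops : List MOp) {s : MState}, s.Fresh → mvalid s ops →
    (ops.foldl mstep s).mass = s.mass + ops.countP MOp.isIns
  | [], _, _, _ => rfl
  | .ins :: ops, s, hs, hv => by
    rw [List.foldl_cons, mass_foldl ops (hs.mstep _) hv, mass_mstep_ins hs,
      List.countP_cons_of_pos MOp.isIns_ins]
    omega
  | .split a b :: ops, s, hs, ⟨ha, hb, hab, hbag, hi, hv⟩ => by
    rw [List.foldl_cons, mass_foldl ops (hs.mstep _) hv, mass_mstep_split hs ha hb hab hbag.symm hi]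
    simp

theorem potential_le_mass (v : ℕ → ℝ) (hv : ∀ j ∈ s.live, v j ≤ 1) : s.potential v ≤ s.mass := by
  rw [potential, mass, liveSum, liveSum, Nat.cast_sum]
  exact Finset.sum_le_sum fun j hj => mul_le_of_le_one_right (Nat.cast_nonneg _) (hv j hj)

variable {R δ : ℝ} {v : ℕ → ℝ}

theorem potential_mstep_ins (hs : s.Fresh) (hv : |v s.next| ≤ 1) :
    s.potential v - 1 ≤ (mstep s .ins).potential v := by
  have := s.liveSum_mstep_ins (fun j b => (b : ℝ) * v j) hs
  simp only [potential, Nat.cast_one] at this ⊢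
  rw [this]
  linarith [(abs_le.mp hv).1]

/-- With `i = bag a` and `n = s.next`, the split trades `i (v a + v b)` for
`(i + 1) v n + (i - 1) v (n + 1) = i (v n + v (n + 1)) + (v n - v (n + 1))`. -/
theorem potential_mstep_split (hs : s.Fresh) {a b B : ℕ} (hδ : 0 ≤ δ) (ha : a ∈ s.live)
    (hb : b ∈ s.live) (hab : a ≠ b) (hbag : s.bag b = s.bag a) (hi : 1 ≤ s.bag a)
    (hiB : s.bag a ≤ B) (hsum : |v s.next + v (s.next + 1) - (v a + v b)| ≤ δ)
    (hdiff : 2 / R ≤ v s.next - v (s.next + 1)) :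
    s.potential v + (2 / R - B * δ) ≤ (mstep s (.split a b)).potential v := by
  have := s.liveSum_mstep_split (fun j b => (b : ℝ) * v j) hs ha hb hab hbag
  simp only [potential, Nat.cast_sub hi, Nat.cast_add, Nat.cast_one] at this ⊢
  have hi₀ : (0 : ℝ) ≤ s.bag a := Nat.cast_nonneg _
  have hiB' : (s.bag a : ℝ) ≤ B := by exact_mod_cast hiB
  nlinarith [(abs_le.mp hsum).1, mul_le_mul_of_nonneg_right hiB' hδ]

theorem potential_foldl {B : ℕ} (hδ : 0 ≤ δ) : ∀ (ops : List MOp) {s : MState}, s.Fresh →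
    ValidBelow B s ops → mconsistent R δ v s ops →
    s.potential v + ops.countP (fun o => !o.isIns) * (2 / R - B * δ) - ops.countP MOp.isIns ≤
      (ops.foldl mstep s).potential v
  | [], _, _, _, _ => by simp
  | .ins :: ops, s, hs, hv, ⟨hins, hc⟩ => by
    have hstep := potential_mstep_ins hs hins
    have hrest := potential_foldl hδ ops (hs.mstep _) hv hc
    simp only [List.foldl_cons, List.countP_cons, MOp.isIns_ins, Bool.not_true] at hrest ⊢
    push_cast
    linarith
  | .split a b :: ops, s, hs, ⟨ha, hb, hab, hbag, hi, hiB, hv⟩, ⟨hsum, hdiff, hc⟩ => by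
    have hstep := potential_mstep_split hs hδ ha hb hab hbag.symm hi hiB hsum hdiff
    have hrest := potential_foldl hδ ops (hs.mstep _) hv hc
    simp only [List.foldl_cons, List.countP_cons, MOp.isIns_split, Bool.not_false] at hrest ⊢
    push_cast
    linarith

end MState

theorem exists_lt_next_one_lt_of_gain {B : ℕ} {R δ : ℝ} {v : ℕ → ℝ} {ops : List MOp}
    (hδ : 0 ≤ δ) (hvalid : ValidBelow B minit ops) (hcons : mconsistent R δ v minit ops)
    (hgain : 2 * (ops.countP MOp.isIns : ℝ) < ops.countP (fun o => !o.isIns) * (2 / R - B * δ)) :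
    ∃ i < (mrun ops).next, 1 < v i := by
  by_contra! hle
  have hfresh := MState.fresh_minit.foldl ops
  have hupper := MState.potential_le_mass v fun j hj => hle j (hfresh j hj)
  have hlower := MState.potential_foldl hδ ops MState.fresh_minit hvalid hcons
  have hpotential : minit.potential v = 0 := by simp [MState.potential, MState.liveSum, minit]
  have hmass : minit.mass = 0 := by simp [MState.mass, MState.liveSum, minit]
  rw [MState.mass_foldl ops MState.fresh_minit hvalid.mvalid, hmass, zero_add] at hupper
  rw [hpotential] at hlower
  linarith

/-- A move of a chip-firing program on configurations `ℕ → ℤ` counting the marbles in each bag: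
`fire i` stands for a split of two marbles of bag `i`. -/
inductive Move where
  | ins : Move
  | fire : ℕ → Move

namespace Move

def isIns : Move → Bool
  | ins => true
  | fire _ => false

@[simp] theorem isIns_ins : ins.isIns = true := rfl

@[simp] theorem isIns_fire (i : ℕ) : (fire i).isIns = false := rfl

def effect : Move → ℕ → ℤ
  | ins => Pi.single 1 1
  | fire i => Pi.single (i + 1) 1 + Pi.single (i - 1) 1 - 2 • Pi.single i 1

def Allowed (B : ℕ) (c : ℕ → ℤ) : Move → Prop
  | ins => True
  | fire i => 1 ≤ i ∧ i ≤ B ∧ 2 ≤ c i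

end Move

def netEffect (ms : List Move) : ℕ → ℤ := (ms.map Move.effect).sum

def ChipLegal (B : ℕ) : (ℕ → ℤ) → List Move → Prop
  | _, [] => True
  | c, m :: ms => m.Allowed B c ∧ ChipLegal B (c + m.effect) ms

theorem netEffect_append (l₁ l₂ : List Move) :
    netEffect (l₁ ++ l₂) = netEffect l₁ + netEffect l₂ := by
  simp [netEffect]

theorem netEffect_singleton (m : Move) : netEffect [m] = m.effect := by
  simp [netEffect]

theorem chipLegal_append {B : ℕ} {c : ℕ → ℤ} {l₁ l₂ : List Move} :
    ChipLegal B c (l₁ ++ l₂) ↔ ChipLegal B c l₁ ∧ ChipLegal B (c + netEffect l₁) l₂ := by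
  induction l₁ generalizing c with
  | nil => simp [ChipLegal, netEffect]
  | cons m l ih =>
    simp only [List.cons_append, ChipLegal, ih, netEffect, List.map_cons, List.sum_cons,
      add_assoc, and_assoc]

theorem chipLegal_snoc {B : ℕ} {c : ℕ → ℤ} {l : List Move} {m : Move} :
    ChipLegal B c (l ++ [m]) ↔ ChipLegal B c l ∧ m.Allowed B (c + netEffect l) := by
  simp [chipLegal_append, ChipLegal]

namespace MState

def count (s : MState) : ℕ → ℤ := s.liveSum fun _ b => Pi.single b 1

variable {s : MState}

theorem count_apply (t : ℕ) : s.count t = ((s.live.filter (s.bag · = t)).card : ℤ) := by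
  simp [count, liveSum, Finset.sum_apply, Pi.single_apply, eq_comm]

theorem count_mstep_ins (hs : s.Fresh) : (mstep s .ins).count = s.count + Move.ins.effect :=
  s.liveSum_mstep_ins _ hs

theorem count_mstep_split (hs : s.Fresh) {a b : ℕ} (ha : a ∈ s.live) (hb : b ∈ s.live)
    (hab : a ≠ b) (hbag : s.bag b = s.bag a) :
    (mstep s (.split a b)).count = s.count + (Move.fire (s.bag a)).effect := by
  have := s.liveSum_mstep_split (fun _ b => Pi.single b (1 : ℤ)) hs ha hb hab hbag
  simp only [count, Move.effect] at this ⊢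
  rw [← sub_eq_zero, ← sub_eq_zero.mpr this]
  abel

end MState

theorem exists_validBelow_of_chipLegal (B : ℕ) : ∀ (ms : List Move) {s : MState}, s.Fresh →
    ChipLegal B s.count ms → ∃ ops : List MOp, ValidBelow B s ops ∧
      ops.countP MOp.isIns = ms.countP Move.isIns ∧
      ops.countP (fun o => !o.isIns) = ms.countP (fun m => !m.isIns)
  | [], _, _, _ => ⟨[], trivial, rfl, rfl⟩
  | .ins :: ms, s, hs, ⟨_, hlegal⟩ => by
    rw [← MState.count_mstep_ins hs] at hlegal
    obtain ⟨ops, hvalid, hins, hfire⟩ := exists_validBelow_of_chipLegal B ms (hs.mstep _) hlegal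
    exact ⟨.ins :: ops, hvalid, by simp [List.countP_cons, hins], by simp [hfire]⟩
  | .fire i :: ms, s, hs, ⟨⟨hi, hiB, hcount⟩, hlegal⟩ => by
    rw [MState.count_apply] at hcount
    obtain ⟨a, ha, b, hb, hab⟩ := Finset.one_lt_card.mp (by exact_mod_cast hcount)
    rw [Finset.mem_filter] at ha hb
    rw [← ha.2, ← MState.count_mstep_split hs ha.1 hb.1 hab (hb.2.trans ha.2.symm)] at hlegal
    obtain ⟨ops, hvalid, hins, hfire⟩ := exists_validBelow_of_chipLegal B ms (hs.mstep _) hlegal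
    exact ⟨.split a b :: ops, ⟨ha.1, hb.1, hab, ha.2.trans hb.2.symm, ha.2 ▸ hi, ha.2 ▸ hiB,
      hvalid⟩, by simp [hins], by simp [hfire]⟩

def wave : ℕ → List Move
  | 0 => [.ins]
  | j + 1 => wave j ++ [.fire (j + 1)]

def phase : ℕ → List Move
  | 0 => []
  | h + 1 => phase h ++ wave h

def ladder : ℕ → List Move
  | 0 => []
  | k + 1 => ladder k ++ phase (k + 1)

theorem netEffect_wave (j : ℕ) :
    netEffect (wave j) = Pi.single 0 1 - Pi.single j 1 + Pi.single (j + 1) 1 := by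
  induction j with
  | zero => simp [wave, netEffect_singleton, Move.effect]
  | succ j ih =>
    rw [wave, netEffect_append, ih, netEffect_singleton, Move.effect, Nat.add_sub_cancel]
    abel

theorem netEffect_phase (h : ℕ) :
    netEffect (phase h) = h • Pi.single 0 1 - Pi.single 0 1 + Pi.single h 1 := by
  induction h with
  | zero => simp [phase, netEffect]
  | succ h ih =>
    rw [phase, netEffect_append, ih, netEffect_wave, succ_nsmul]
    abel

theorem netEffect_phase_apply (h : ℕ) {t : ℕ} (ht : 1 ≤ t) :
    netEffect (phase h) t = if t = h then 1 else 0 := by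
  simp [netEffect_phase, Pi.single_apply, show t ≠ 0 by omega]

theorem netEffect_ladder_apply (k : ℕ) {t : ℕ} (ht : 1 ≤ t) :
    netEffect (ladder k) t = if t ≤ k then 1 else 0 := by
  induction k with
  | zero => rw [if_neg (by omega)]; rfl
  | succ k ih =>
    rw [ladder, netEffect_append, Pi.add_apply, ih, netEffect_phase_apply _ ht]
    split_ifs <;> omega

theorem chipLegal_wave {B j : ℕ} {c : ℕ → ℤ} (hj : j ≤ B) (hc : ∀ t, 1 ≤ t → t ≤ j → 1 ≤ c t) :
    ChipLegal B c (wave j) := by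
  induction j with
  | zero => exact ⟨trivial, trivial⟩
  | succ j ih =>
    have hcarry : netEffect (wave j) (j + 1) = 1 := by simp [netEffect_wave]
    rw [wave, chipLegal_snoc]
    refine ⟨ih (by omega) fun t ht htj => hc t ht (by omega), by omega, hj, ?_⟩
    rw [Pi.add_apply, hcarry]
    linarith [hc (j + 1) (by omega) le_rfl]

theorem chipLegal_phase {B h : ℕ} {c : ℕ → ℤ} (hh : h ≤ B + 1)
    (hc : ∀ t, 1 ≤ t → t < h → 1 ≤ c t) : ChipLegal B c (phase h) := by
  induction h with
  | zero => trivial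
  | succ h ih =>
    rw [phase, chipLegal_append]
    refine ⟨ih (by omega) fun t ht hth => hc t ht (by omega), chipLegal_wave (by omega) ?_⟩
    intro t ht hth
    have := hc t ht (by omega)
    rw [Pi.add_apply, netEffect_phase_apply _ ht]
    split_ifs <;> omega

theorem chipLegal_ladder {B k : ℕ} (hk : k ≤ B + 1) : ChipLegal B 0 (ladder k) := by
  induction k with
  | zero => trivial
  | succ k ih =>
    rw [ladder, chipLegal_append]
    refine ⟨ih (by omega), chipLegal_phase hk fun t ht htk => ?_⟩
    rw [zero_add, netEffect_ladder_apply k ht, if_pos (by omega)]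

theorem countP_isIns_ladder (k : ℕ) : 2 * (ladder k).countP Move.isIns = k ^ 2 + k := by
  have hwave (j : ℕ) : (wave j).countP Move.isIns = 1 := by
    induction j with
    | zero => rfl
    | succ j ih => simp [wave, ih]
  have hphase (h : ℕ) : (phase h).countP Move.isIns = h := by
    induction h with
    | zero => rfl
    | succ h ih => simp [phase, ih, hwave]
  induction k with
  | zero => rfl
  | succ k ih =>
    simp only [ladder, List.countP_append, hphase]
    linear_combination ih

theorem countP_fire_ladder (k : ℕ) : 6 * (ladder k).countP (fun m => !m.isIns) + k = k ^ 3 := by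
  have hwave (j : ℕ) : (wave j).countP (fun m => !m.isIns) = j := by
    induction j with
    | zero => rfl
    | succ j ih => simp [wave, ih]
  have hphase (h : ℕ) : 2 * (phase h).countP (fun m => !m.isIns) + h = h ^ 2 := by
    induction h with
    | zero => rfl
    | succ h ih =>
      simp only [phase, List.countP_append, hwave]
      linear_combination ih
  induction k with
  | zero => rfl
  | succ k ih =>
    simp only [ladder, List.countP_append]
    linear_combination ih + 3 * hphase (k + 1)

theorem two_mul_lt_of_ladder_counts {x δ N S : ℝ} (hx : 1 ≤ x) (hδ : δ ≤ 1 / (128 * x ^ 2))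
    (hN : 2 * N = (8 * x) ^ 2 + 8 * x) (hS : 6 * S + 8 * x = (8 * x) ^ 3) :
    2 * N < S * (2 / x - 8 * x * δ) := by
  have hx₀ : 0 < x := by linarith
  have hpenalty : 8 * x * δ ≤ 1 / (16 * x) :=
    calc 8 * x * δ ≤ 8 * x * (1 / (128 * x ^ 2)) := by gcongr
      _ = 1 / (16 * x) := by field_simp; ring
  have hS₀ : 0 ≤ S := by nlinarith
  calc 2 * N < S * 31 / (16 * x) := by
        rw [lt_div_iff₀ (by positivity)]
        nlinarith
    _ = S * (2 / x - 1 / (16 * x)) := by field_simp; ring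
    _ ≤ S * (2 / x - 8 * x * δ) := by gcongr

/-- Alice has a deterministic oblivious strategy with `O(R³)`
operations, only `O(R²)` of which are insertions, that forces some marble to
have value greater than `1`, regardless of how Bob assigns values (the sum
slack `δ` being `o(R^{−2})`, i.e. at most `1/(KR²)`). -/
theorem stmt10 :
    ∃ K : ℝ, 0 < K ∧ ∀ R : ℕ, 1 ≤ R →
    ∃ ops : List MOp,
      (ops.length : ℝ) ≤ K * (R : ℝ) ^ 3 ∧
      ((ops.filter MOp.isIns).length : ℝ) ≤ K * (R : ℝ) ^ 2 ∧
      mvalid minit ops ∧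
      ∀ δ : ℝ, 0 ≤ δ → δ ≤ 1 / (K * (R : ℝ) ^ 2) →
      ∀ v : ℕ → ℝ, mconsistent (R : ℝ) δ v minit ops →
      ∃ i < (mrun ops).next, 1 < v i := by
  refine ⟨128, by norm_num, fun R hR => ?_⟩
  have hlegal : ChipLegal (8 * R) minit.count (ladder (8 * R)) := chipLegal_ladder (by omega)
  obtain ⟨ops, hvalid, hins, hfire⟩ :=
    exists_validBelow_of_chipLegal _ _ MState.fresh_minit hlegal
  have hx : (1 : ℝ) ≤ R := by exact_mod_cast hR
  have hN : 2 * (ops.countP MOp.isIns : ℝ) = (8 * R) ^ 2 + 8 * R := by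
    exact_mod_cast hins ▸ countP_isIns_ladder (8 * R)
  have hS : 6 * (ops.countP (fun o => !o.isIns) : ℝ) + 8 * R = (8 * R) ^ 3 := by
    exact_mod_cast hfire ▸ countP_fire_ladder (8 * R)
  have hlen : (ops.length : ℝ) = ops.countP MOp.isIns + ops.countP (fun o => !o.isIns) := by
    exact_mod_cast by simpa using List.length_eq_countP_add_countP MOp.isIns (l := ops)
  refine ⟨ops, ?_, ?_, hvalid.mvalid, fun δ hδ₀ hδ v hcons =>
    exists_lt_next_one_lt_of_gain hδ₀ hvalid hcons ?_⟩
  · nlinarith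
  · rw [← List.countP_eq_length_filter]
    nlinarith
  · push_cast
    exact two_mul_lt_of_ladder_counts hx (by simpa using hδ) hN hS
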